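/- Let P be a training set in EuclideanSpace ℝ (Fin d). Then there exists a selective subset R ⊆ P all of whose elements are border points of P; in particular, P admits a selective subset of cardinality at most k, the number of border points of P. -/

import Mathlib

/-!
For `p ∈ P` with nearest enemy `q`, the intermediate value theorem gives a point `w ≠ p` of the
segment `[p, q]` that is as far from the friends of `p` as from its enemies. The ball around `w`
through a nearest friend `a` of `w` has no point of `P` in its interior and an enemy on its
boundary, so `a` is a border point. This ball lies inside the ball of radius `‖p - q‖` around `p`
and touches its boundary only at `q` (strict convexity), hence `‖p - a‖ < ‖p - q‖ = d_ne(p)`. The border points therefore form a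
selective subset.
-/

/-- The nearest-enemy distance of `p`: the minimum of `‖p - q‖` over enemies `q` of `p`. -/
noncomputable def dne {d : ℕ} {Λ : Type*} (P : Finset (EuclideanSpace ℝ (Fin d)))
    (l : EuclideanSpace ℝ (Fin d) → Λ) (p : EuclideanSpace ℝ (Fin d)) : ℝ :=
  sInf {r : ℝ | ∃ q ∈ P, l q ≠ l p ∧ r = ‖p - q‖}

/-- `q` is a nearest enemy of `p` in `P`: an enemy of `p` at minimum distance. -/
def IsNearestEnemy {d : ℕ} {Λ : Type*} (P : Finset (EuclideanSpace ℝ (Fin d)))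
    (l : EuclideanSpace ℝ (Fin d) → Λ) (p q : EuclideanSpace ℝ (Fin d)) : Prop :=
  q ∈ P ∧ l q ≠ l p ∧ ∀ q' ∈ P, l q' ≠ l p → ‖p - q‖ ≤ ‖p - q'‖

/-- `p` is a border point of `P`: it lies, together with some enemy `q`, on the boundary of
a ball containing no point of `P` in its interior. -/
def IsBorder {d : ℕ} {Λ : Type*} (P : Finset (EuclideanSpace ℝ (Fin d)))
    (l : EuclideanSpace ℝ (Fin d) → Λ) (p : EuclideanSpace ℝ (Fin d)) : Prop :=
  ∃ q ∈ P, l q ≠ l p ∧ ∃ (z : EuclideanSpace ℝ (Fin d)) (ρ : ℝ), 0 < ρ ∧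
    ‖z - p‖ = ρ ∧ ‖z - q‖ = ρ ∧ ∀ x ∈ P, ρ ≤ ‖z - x‖

open Metric AffineMap

section NormedSpace

variable {E : Type*} [NormedAddCommGroup E] [NormedSpace ℝ E]

theorem exists_wbtw_infDist_eq {S T : Set E} {p q : E} (hp : p ∈ S) (hq : q ∈ T)
    (hpT : 0 < infDist p T) : ∃ w, Wbtw ℝ p w q ∧ w ≠ p ∧ infDist w S = infDist w T := by
  set F : ℝ → ℝ := fun t => infDist (lineMap p q t) S - infDist (lineMap p q t) T
  have hF : Continuous F :=
    ((continuous_infDist_pt S).comp lineMap_continuous).sub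
      ((continuous_infDist_pt T).comp lineMap_continuous)
  have hF0 : F 0 < 0 := by simp [F, infDist_zero_of_mem hp, hpT]
  have hF1 : 0 ≤ F 1 := by simp [F, infDist_zero_of_mem hq, infDist_nonneg]
  obtain ⟨t, ht, hFt⟩ := intermediate_value_Icc zero_le_one hF.continuousOn ⟨hF0.le, hF1⟩
  refine ⟨lineMap p q t, ⟨t, ht, rfl⟩, fun hwp => ?_, sub_eq_zero.mp hFt⟩
  simp only [F, hwp, infDist_zero_of_mem hp, zero_sub, neg_eq_zero] at hFt
  exact hpT.ne' hFt

theorem eq_of_lineMap_eq_lineMap {p a b : E} {r : ℝ} (hr : r ≠ 0)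
    (h : lineMap p a r = lineMap p b r) : a = b := by
  rw [lineMap_apply_module, lineMap_apply_module] at h
  exact smul_right_injective E hr (add_left_cancel h)

variable [StrictConvexSpace ℝ E]

theorem dist_lt_of_wbtw_of_dist_le {p q w a : E} (hw : Wbtw ℝ p w q) (hwp : w ≠ p)
    (ha : dist w a ≤ dist w q) (haq : a ≠ q) : dist p a < dist p q := by
  have hpwq := hw.dist_add_dist
  have hpw : 0 < dist p w := dist_pos.2 hwp.symm
  by_contra! hqa
  have hpwa : dist p w + dist w a = dist p a := by linarith [dist_triangle p w a]
  have hpa : dist p a = dist p q := by linarith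
  have hpq : 0 < dist p q := by linarith [dist_nonneg (x := w) (y := q)]
  have hlineMap : ∀ x, dist p w + dist w x = dist p q → dist p x = dist p q →
      w = lineMap p x (dist p w / dist p q) := fun x hx hpx =>
    eq_lineMap_of_dist_eq_mul_of_dist_eq_mul (by rw [hpx]; field_simp)
      (by rw [hpx]; field_simp; linarith)
  exact haq <| eq_of_lineMap_eq_lineMap (div_pos hpw hpq).ne'
    ((hlineMap a (by linarith) hpa).symm.trans (hlineMap q hpwq rfl))

end NormedSpace

section TrainingSet

variable {d : ℕ} {Λ : Type*} (P : Finset (EuclideanSpace ℝ (Fin d)))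
  (l : EuclideanSpace ℝ (Fin d) → Λ) {p : EuclideanSpace ℝ (Fin d)}

theorem exists_isNearestEnemy (hp : ∃ q ∈ P, l q ≠ l p) : ∃ q, IsNearestEnemy P l p q := by
  classical
  obtain ⟨q, hq, hmin⟩ := (P.filter (l · ≠ l p)).exists_min_image (‖p - ·‖)
    (by simpa [Finset.Nonempty] using hp)
  rw [Finset.mem_filter] at hq
  exact ⟨q, hq.1, hq.2, fun q' hq' hl => hmin q' (Finset.mem_filter.2 ⟨hq', hl⟩)⟩

variable {P l} in
theorem IsNearestEnemy.dne_eq {q : EuclideanSpace ℝ (Fin d)} (h : IsNearestEnemy P l p q) :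
    dne P l p = ‖p - q‖ :=
  IsLeast.csInf_eq ⟨⟨q, h.1, h.2.1, rfl⟩, by rintro r ⟨q', hq', hl, rfl⟩; exact h.2.2 q' hq' hl⟩

theorem exists_isBorder_of_infDist_eq {w : EuclideanSpace ℝ (Fin d)} (hp : p ∈ P)
    (hq : ∃ q ∈ P, l q ≠ l p)
    (hw : infDist w {x | x ∈ P ∧ l x = l p} = infDist w {x | x ∈ P ∧ l x ≠ l p}) :
    ∃ a ∈ P, l a = l p ∧ IsBorder P l a ∧ ∀ x ∈ P, dist w a ≤ dist w x := by
  obtain ⟨q, hqP, hlq⟩ := hq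
  obtain ⟨a, ⟨haP, hla⟩, hwa⟩ := (P.finite_toSet.sep (l · = l p)).isCompact
    |>.exists_infDist_eq_dist ⟨p, hp, rfl⟩ w
  obtain ⟨b, ⟨hbP, hlb⟩, hwb⟩ := (P.finite_toSet.sep (l · ≠ l p)).isCompact
    |>.exists_infDist_eq_dist ⟨q, hqP, hlq⟩ w
  have hab : dist w b = dist w a := by rw [← hwa, ← hwb]; exact hw.symm
  have hnear : ∀ x ∈ P, dist w a ≤ dist w x := by
    intro x hx
    by_cases hlx : l x = l p
    · exact hwa ▸ infDist_le_dist_of_mem ⟨hx, hlx⟩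
    · exact hab ▸ hwb ▸ infDist_le_dist_of_mem ⟨hx, hlx⟩
  have hpos : 0 < dist w a := by
    refine dist_nonneg.lt_of_ne fun h => hlb ?_
    rw [(dist_eq_zero.1 (hab.trans h.symm)).symm, dist_eq_zero.1 h.symm, hla]
  refine ⟨a, haP, hla, ⟨b, hbP, hla ▸ hlb, w, dist w a, hpos, (dist_eq_norm w a).symm,
    (dist_eq_norm w b).symm.trans hab, fun x hx => dist_eq_norm w x ▸ hnear x hx⟩, hnear⟩

theorem exists_isBorder_norm_sub_lt_dne (hp : p ∈ P) (hq : ∃ q ∈ P, l q ≠ l p) :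
    ∃ a ∈ P, IsBorder P l a ∧ ‖p - a‖ < dne P l p := by
  obtain ⟨q, hnearest⟩ := exists_isNearestEnemy P l hq
  obtain ⟨hqP, hlq, -⟩ := id hnearest
  have hpT : 0 < infDist p {x | x ∈ P ∧ l x ≠ l p} :=
    ((P.finite_toSet.sep (l · ≠ l p)).isClosed.notMem_iff_infDist_pos ⟨q, hqP, hlq⟩).1
      fun h => h.2 rfl
  obtain ⟨w, hw, hwp, hinf⟩ := exists_wbtw_infDist_eq (show p ∈ {x | x ∈ P ∧ l x = l p} from
    ⟨hp, rfl⟩) (show q ∈ {x | x ∈ P ∧ l x ≠ l p} from ⟨hqP, hlq⟩) hpT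
  obtain ⟨a, haP, hla, ha, hnear⟩ := exists_isBorder_of_infDist_eq P l hp ⟨q, hqP, hlq⟩ hinf
  refine ⟨a, haP, ha, ?_⟩
  rw [hnearest.dne_eq, ← dist_eq_norm, ← dist_eq_norm]
  exact dist_lt_of_wbtw_of_dist_le hw hwp (hnear q hqP) fun h => hlq (h ▸ hla)

end TrainingSet

/-- `P` admits a selective subset consisting only of border points of `P`; in particular,
a selective subset of cardinality at most the number `k` of border points of `P`. -/
theorem vss_exists {d : ℕ} {Λ : Type*}
    (P : Finset (EuclideanSpace ℝ (Fin d))) (l : EuclideanSpace ℝ (Fin d) → Λ)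
    (hP : ∀ p ∈ P, ∃ q ∈ P, l q ≠ l p) :
    ∃ R : Finset (EuclideanSpace ℝ (Fin d)), R ⊆ P ∧
      (∀ r ∈ R, IsBorder P l r) ∧
      (∀ p ∈ P, ∃ r ∈ R, ‖p - r‖ < dne P l p) ∧
      R.card ≤ {q : EuclideanSpace ℝ (Fin d) | q ∈ P ∧ IsBorder P l q}.ncard := by
  classical
  refine ⟨P.filter (IsBorder P l), Finset.filter_subset _ _, fun r hr => (Finset.mem_filter.1 hr).2,
    fun p hp => ?_, ?_⟩
  · obtain ⟨a, haP, ha, hlt⟩ := exists_isBorder_norm_sub_lt_dne P l hp (hP p hp)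
    exact ⟨a, Finset.mem_filter.2 ⟨haP, ha⟩, hlt⟩
  · rw [← Finset.coe_filter, Set.ncard_coe_finset]
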